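/- Evolution of the row norms under one gradient step (Lemma 3.3): Let α be any weights, η_L > 0, and define α̃ := α − η_L ∇_α J_L(α). For k ∈ {1,…,L} and m ∈ {1,…,d} define f_{k,m}(α) := (1/2) L ‖α_{k,m}‖₂², where α_{k,m} is the m-th row of α_k. Under activation assumption (i), f_{k,m}(α̃)^{1/2} ≤ f_{k,m}(α)^{1/2} + (1/√2) η_L ((1/N) Σ_{i=1}^N ‖h_{k-1}^{x_i}(α)‖₂² ‖G_k^{x_i,y_i}(α)‖_∞²)^{1/2}. -/

import Mathlib

/-!
The step changes the row `α_{k,m}` by `-η ∇_{α_{k,m}} J`, so by the triangle inequality it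
suffices to bound `√(L/2) ‖∇_{α_{k,m}} J‖₂`. Differentiating the forward pass along the
coordinate direction of the entry `(k, m, n)`, the tangent of the hidden states vanishes up to
layer `k`, equals `L^{-1/2} σ'((α_k h_k)_m) (h_k)_n e_m` at layer `k + 1`, and is then
transported to the output by the Jacobian `M_{k+1}`; hence
`∂J/∂α_{k,m,n} = (1/N) Σ_i L^{-1/2} σ'(…) (h_k^{x_i})_n (G_{k+1}^{x_i,y_i})_m`.
Jensen's inequality for the mean, `|σ'| ≤ 1` and `|G_m| ≤ ‖G‖_∞` then give
`L ‖∇_{α_{k,m}} J‖₂² ≤ (1/N) Σ_i ‖h_k^{x_i}‖₂² ‖G_{k+1}^{x_i,y_i}‖_∞²`.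
-/

open Finset

noncomputable section

/-- Euclidean norm of a vector in `ℝ^d`. -/
def vnorm {d : ℕ} (v : Fin d → ℝ) : ℝ := Real.sqrt (∑ i, v i ^ 2)

/-- Frobenius norm of a `d × d` real matrix. -/
def frobNorm {d : ℕ} (A : Fin d → Fin d → ℝ) : ℝ := Real.sqrt (∑ i, ∑ j, A i j ^ 2)

/-- Matrix-vector product. -/
def mulVec' {d : ℕ} (A : Fin d → Fin d → ℝ) (v : Fin d → ℝ) : Fin d → ℝ :=
  fun i => ∑ j, A i j * v j

/-- Matrix-matrix product. -/
def matMul' {d : ℕ} (A B : Fin d → Fin d → ℝ) : Fin d → Fin d → ℝ :=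
  fun i j => ∑ l, A i l * B l j

/-- Hidden states of the residual network: `h_0 = x` and
`h_{k+1} = h_k + L^{-1/2} σ_d(α_{k+1} h_k)`, where the weight of the (1-based)
layer `k+1` is stored at the (0-based) index `k`. -/
def hiddenState {d L : ℕ} (σ : ℝ → ℝ) (α : Fin L → Fin d → Fin d → ℝ) (x : Fin d → ℝ) :
    ℕ → Fin d → ℝ
  | 0 => x
  | k + 1 =>
      if h : k < L then
        fun i => hiddenState σ α x k i + (Real.sqrt L)⁻¹ * σ (mulVec' (α ⟨k, h⟩) (hiddenState σ α x k) i)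
      else hiddenState σ α x k

/-- One factor `I_d + L^{-1/2} diag(σ'(α_{k+1} h_k)) α_{k+1}` of the layer-to-output
Jacobian (0-based index `k`). -/
def layerJac {d L : ℕ} (σ : ℝ → ℝ) (α : Fin L → Fin d → Fin d → ℝ) (x : Fin d → ℝ)
    (k : ℕ) (h : k < L) : Fin d → Fin d → ℝ :=
  fun i i' => (if i = i' then (1 : ℝ) else 0) +
    (Real.sqrt L)⁻¹ * deriv σ (mulVec' (α ⟨k, h⟩) (hiddenState σ α x k) i) * α ⟨k, h⟩ i i'

/-- Layer-to-output Jacobian `M_k^x(α) = ∂h_L/∂h_k`, where `k` is the 1-based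
paper index, `0 ≤ k ≤ L`. -/
def jacM {d L : ℕ} (σ : ℝ → ℝ) (α : Fin L → Fin d → Fin d → ℝ) (x : Fin d → ℝ) :
    ℕ → Fin d → Fin d → ℝ
  | k =>
      if h : k < L then matMul' (jacM σ α x (k + 1)) (layerJac σ α x k h)
      else fun i i' => if i = i' then 1 else 0
  termination_by k => L - k
  decreasing_by omega

/-- Mean-squared training loss `J_L`. -/
def loss {d L N : ℕ} (σ : ℝ → ℝ) (x y : Fin N → Fin d → ℝ)
    (α : Fin L → Fin d → Fin d → ℝ) : ℝ :=
  (1 / (2 * N)) * ∑ i, ∑ j, (y i j - hiddenState σ α (x i) L j) ^ 2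

/-- Partial derivative of the loss with respect to the `(m,n)` entry of the
`k`-th weight matrix. -/
def gradEntry {d L N : ℕ} (σ : ℝ → ℝ) (x y : Fin N → Fin d → ℝ)
    (α : Fin L → Fin d → Fin d → ℝ) (k : Fin L) (m n : Fin d) : ℝ :=
  fderiv ℝ (loss σ x y) α (Pi.single k (Pi.single m (Pi.single n 1)))

/-- `G_k^{x,y}(α) = (M_k^x(α))ᵀ (ŷ(x,α) − y)`; `k` is the 1-based paper index. -/
def Gvec {d L : ℕ} (σ : ℝ → ℝ) (α : Fin L → Fin d → Fin d → ℝ) (x y : Fin d → ℝ)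
    (k : ℕ) : Fin d → ℝ :=
  fun n => ∑ j, jacM σ α x k j n * (hiddenState σ α x L j - y j)

/-- Assumption (i) on the activation function: `σ ∈ C²`, `σ'(0) = 1`, and
`|σ(z)| ≤ |z|`, `|σ'(z)| ≤ 1`, `|σ''(z)| ≤ 1` for all `z`. -/
def ActAssump (σ : ℝ → ℝ) : Prop :=
  ContDiff ℝ 2 σ ∧ deriv σ 0 = 1 ∧
    ∀ z : ℝ, |σ z| ≤ |z| ∧ |deriv σ z| ≤ 1 ∧ |deriv (deriv σ) z| ≤ 1

lemma sqrt_sum_sq_sub_mul_le {ι : Type*} [Fintype ι] (a b : ι → ℝ) {η : ℝ} (hη : 0 ≤ η) :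
    Real.sqrt (∑ i, (a i - η * b i) ^ 2) ≤
      Real.sqrt (∑ i, a i ^ 2) + η * Real.sqrt (∑ i, b i ^ 2) := by
  simpa only [EuclideanSpace.norm_eq, norm_smul, Real.norm_eq_abs, sq_abs, abs_of_nonneg hη,
    PiLp.sub_apply, PiLp.smul_apply, smul_eq_mul] using
    norm_sub_le (WithLp.toLp 2 a : EuclideanSpace ℝ ι) (η • WithLp.toLp 2 b)

lemma vnorm_sq {d : ℕ} (v : Fin d → ℝ) : vnorm v ^ 2 = ∑ i, v i ^ 2 :=
  Real.sq_sqrt (by positivity)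

lemma mulVec'_matMul' {d : ℕ} (A B : Fin d → Fin d → ℝ) (v : Fin d → ℝ) :
    mulVec' (matMul' A B) v = mulVec' A (mulVec' B v) := by
  ext i
  simp only [mulVec', matMul', sum_mul, mul_sum, mul_assoc]
  exact sum_comm

lemma mulVec'_one {d : ℕ} (v : Fin d → ℝ) :
    mulVec' (fun i i' => if i = i' then 1 else 0) v = v := by
  ext i
  simp [mulVec']

section ResNet

variable {d L N : ℕ} {σ : ℝ → ℝ}

lemma hiddenState_succ_of_lt (α : Fin L → Fin d → Fin d → ℝ) (x : Fin d → ℝ) {t : ℕ}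
    (ht : t < L) :
    hiddenState σ α x (t + 1) =
      hiddenState σ α x t + (Real.sqrt L)⁻¹ • fun i =>
        σ (mulVec' (α ⟨t, ht⟩) (hiddenState σ α x t) i) := by
  ext i
  simp [hiddenState, ht]

lemma hiddenState_succ_of_le (α : Fin L → Fin d → Fin d → ℝ) (x : Fin d → ℝ) {t : ℕ}
    (ht : L ≤ t) : hiddenState σ α x (t + 1) = hiddenState σ α x t := by
  simp [hiddenState, Nat.not_lt.mpr ht]

lemma jacM_of_lt (α : Fin L → Fin d → Fin d → ℝ) (x : Fin d → ℝ) {t : ℕ} (ht : t < L) :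
    jacM σ α x t = matMul' (jacM σ α x (t + 1)) (layerJac σ α x t ht) := by
  rw [jacM, dif_pos ht]

lemma jacM_of_le (α : Fin L → Fin d → Fin d → ℝ) (x : Fin d → ℝ) {t : ℕ} (ht : L ≤ t) :
    jacM σ α x t = fun i i' => if i = i' then 1 else 0 := by
  rw [jacM, dif_neg (Nat.not_lt.mpr ht)]

lemma differentiable_hiddenState (hσ : Differentiable ℝ σ) (x : Fin d → ℝ) (t : ℕ) :
    Differentiable ℝ fun α : Fin L → Fin d → Fin d → ℝ => hiddenState σ α x t := by
  induction t with
  | zero => simp [hiddenState]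
  | succ t ih =>
    rcases lt_or_ge t L with ht | ht
    · simp only [hiddenState_succ_of_lt _ _ ht, mulVec']
      have := differentiable_pi.mp ih
      fun_prop
    · simpa only [hiddenState_succ_of_le _ _ ht] using ih

lemma differentiable_loss (hσ : Differentiable ℝ σ) (x y : Fin N → Fin d → ℝ) :
    Differentiable ℝ (loss (L := L) σ x y) := by
  have := fun i => differentiable_pi.mp (differentiable_hiddenState (L := L) hσ (x i) L)
  unfold loss
  fun_prop

def hiddenStateTangent (σ : ℝ → ℝ) (α E : Fin L → Fin d → Fin d → ℝ) (x : Fin d → ℝ) :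
    ℕ → Fin d → ℝ
  | 0 => 0
  | t + 1 =>
      if h : t < L then
        hiddenStateTangent σ α E x t + (Real.sqrt L)⁻¹ • fun i =>
          deriv σ (mulVec' (α ⟨t, h⟩) (hiddenState σ α x t) i) *
            (mulVec' (E ⟨t, h⟩) (hiddenState σ α x t) i +
              mulVec' (α ⟨t, h⟩) (hiddenStateTangent σ α E x t) i)
      else hiddenStateTangent σ α E x t

lemma hasDerivAt_mulVec'_line (α E : Fin d → Fin d → ℝ) {v : ℝ → Fin d → ℝ} {v' : Fin d → ℝ}
    (hv : HasDerivAt v v' 0) (i : Fin d) :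
    HasDerivAt (fun s => mulVec' (α + s • E) (v s) i)
      (mulVec' E (v 0) i + mulVec' α v' i) 0 := by
  simp only [mulVec', ← sum_add_distrib]
  refine HasDerivAt.fun_sum fun j _ => ?_
  have hline : HasDerivAt (fun s : ℝ => α i j + s * E i j) (E i j) 0 := by
    simpa using ((hasDerivAt_id (0 : ℝ)).mul_const (E i j)).const_add (α i j)
  simpa [add_comm] using hline.fun_mul (hasDerivAt_pi.mp hv j)

theorem hasDerivAt_hiddenState_line (hσ : Differentiable ℝ σ) (α E : Fin L → Fin d → Fin d → ℝ)
    (x : Fin d → ℝ) (t : ℕ) :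
    HasDerivAt (fun s : ℝ => hiddenState σ (α + s • E) x t)
      (hiddenStateTangent σ α E x t) 0 := by
  induction t with
  | zero => simpa [hiddenState, hiddenStateTangent] using hasDerivAt_const (0 : ℝ) x
  | succ t ih =>
    rcases lt_or_ge t L with ht | ht
    · simp only [hiddenState_succ_of_lt _ _ ht, hiddenStateTangent, dif_pos ht]
      refine ih.add (HasDerivAt.fun_const_smul _ (hasDerivAt_pi.mpr fun i => ?_))
      simpa [Function.comp_def] using (hσ _).hasDerivAt.comp (0 : ℝ)
        (hasDerivAt_mulVec'_line (α ⟨t, ht⟩) (E ⟨t, ht⟩) ih i)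
    · simpa only [hiddenState_succ_of_le _ _ ht, hiddenStateTangent, dif_neg (Nat.not_lt.mpr ht)]
        using ih

theorem fderiv_loss_apply (hσ : Differentiable ℝ σ) (x y : Fin N → Fin d → ℝ)
    (α E : Fin L → Fin d → Fin d → ℝ) :
    fderiv ℝ (loss σ x y) α E =
      (1 / N) * ∑ i, ∑ j,
        (hiddenState σ α (x i) L j - y i j) * hiddenStateTangent σ α E (x i) L j := by
  have hline : HasDerivAt (fun s : ℝ => α + s • E) E 0 := by
    simpa using ((hasDerivAt_id (0 : ℝ)).smul_const E).const_add α
  have hviaF : HasDerivAt (fun s : ℝ => loss σ x y (α + s • E)) (fderiv ℝ (loss σ x y) α E) 0 :=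
    (differentiable_loss hσ x y α).hasFDerivAt.comp_hasDerivAt_of_eq 0 hline (by simp)
  have hexplicit : HasDerivAt (fun s : ℝ => loss σ x y (α + s • E))
      ((1 / (2 * N)) * ∑ i, ∑ j, 2 * (y i j - hiddenState σ α (x i) L j) *
        -hiddenStateTangent σ α E (x i) L j) 0 := by
    refine HasDerivAt.const_mul _ (HasDerivAt.fun_sum fun i _ => HasDerivAt.fun_sum fun j _ => ?_)
    simpa using ((hasDerivAt_pi.mp (hasDerivAt_hiddenState_line hσ α E (x i) L) j).const_sub
      (y i j)).fun_pow 2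
  rw [hviaF.unique hexplicit, mul_sum, mul_sum]
  refine sum_congr rfl fun i _ => ?_
  rw [mul_sum, mul_sum]
  refine sum_congr rfl fun j _ => ?_
  rcases eq_or_ne (N : ℝ) 0 with hN | hN
  · simp [hN]
  · field_simp
    ring

section

variable {α E : Fin L → Fin d → Fin d → ℝ} {x : Fin d → ℝ}

lemma hiddenStateTangent_eq_zero {t : ℕ} (hE : ∀ j : Fin L, (j : ℕ) < t → E j = 0) :
    hiddenStateTangent σ α E x t = 0 := by
  induction t with
  | zero => rfl
  | succ t ih =>
    have hprev := ih fun j hj => hE j (by omega)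
    by_cases ht : t < L
    · ext i
      simp [hiddenStateTangent, ht, hprev, hE ⟨t, ht⟩ (by simp), mulVec']
    · simp [hiddenStateTangent, ht, hprev]

lemma hiddenStateTangent_succ {t : ℕ} (ht : t < L) (hE : E ⟨t, ht⟩ = 0) :
    hiddenStateTangent σ α E x (t + 1) =
      mulVec' (layerJac σ α x t ht) (hiddenStateTangent σ α E x t) := by
  ext i
  simp only [hiddenStateTangent, dif_pos ht, hE, layerJac, mulVec', add_mul, sum_add_distrib]
  simp [mul_sum, mul_assoc]

theorem hiddenStateTangent_eq_mulVec'_jacM {t : ℕ} (htL : t ≤ L)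
    (hE : ∀ j : Fin L, t ≤ (j : ℕ) → E j = 0) :
    hiddenStateTangent σ α E x L = mulVec' (jacM σ α x t) (hiddenStateTangent σ α E x t) := by
  rcases htL.eq_or_lt with rfl | ht
  · rw [jacM_of_le α x le_rfl, mulVec'_one]
  · rw [hiddenStateTangent_eq_mulVec'_jacM ht fun j hj => hE j (by omega), jacM_of_lt α x ht,
      mulVec'_matMul', hiddenStateTangent_succ ht (hE _ le_rfl)]
termination_by L - t

end

lemma hiddenStateTangent_single (α : Fin L → Fin d → Fin d → ℝ) (x : Fin d → ℝ) (k : Fin L)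
    (m n : Fin d) :
    hiddenStateTangent σ α (Pi.single k (Pi.single m (Pi.single n 1))) x (k + 1) =
      Pi.single m ((Real.sqrt L)⁻¹ * deriv σ (mulVec' (α k) (hiddenState σ α x k) m) *
        hiddenState σ α x k n) := by
  have hbefore : hiddenStateTangent σ α (Pi.single k (Pi.single m (Pi.single n 1))) x k = 0 :=
    hiddenStateTangent_eq_zero fun j hj => Pi.single_eq_of_ne (Fin.ne_of_lt hj) _
  ext i
  rcases eq_or_ne i m with rfl | him
  · simp [hiddenStateTangent, hbefore, mulVec', Pi.single_apply, mul_assoc]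
  · simp [hiddenStateTangent, hbefore, mulVec', him]

theorem gradEntry_eq (hσ : Differentiable ℝ σ) (x y : Fin N → Fin d → ℝ)
    (α : Fin L → Fin d → Fin d → ℝ) (k : Fin L) (m n : Fin d) :
    gradEntry σ x y α k m n =
      (∑ i, (Real.sqrt L)⁻¹ * deriv σ (mulVec' (α k) (hiddenState σ α (x i) k) m) *
        hiddenState σ α (x i) k n * Gvec σ α (x i) (y i) (k + 1) m) / N := by
  have hlater : ∀ j : Fin L, (k : ℕ) + 1 ≤ j →
      (Pi.single k (Pi.single m (Pi.single n 1)) : Fin L → Fin d → Fin d → ℝ) j = 0 :=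
    fun j hj => Pi.single_eq_of_ne (Fin.ne_of_gt hj) _
  rw [gradEntry, fderiv_loss_apply hσ, one_div_mul_eq_div]
  congr 1
  refine sum_congr rfl fun i _ => ?_
  simp only [hiddenStateTangent_eq_mulVec'_jacM k.isLt hlater, hiddenStateTangent_single, Gvec,
    mulVec', Pi.single_apply, mul_ite, mul_zero, sum_ite_eq', mem_univ, if_true,
    mul_sum]
  exact sum_congr rfl fun j _ => by ring

theorem mul_sum_sq_gradEntry_le (hσ : Differentiable ℝ σ) (hσ' : ∀ z, |deriv σ z| ≤ 1)
    (x y : Fin N → Fin d → ℝ) (α : Fin L → Fin d → Fin d → ℝ) (k : Fin L) (m : Fin d) :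
    L * ∑ n, gradEntry σ x y α k m n ^ 2 ≤
      (1 / N) * ∑ i, vnorm (hiddenState σ α (x i) k) ^ 2 *
        ‖Gvec σ α (x i) (y i) (k + 1)‖ ^ 2 := by
  set h := fun i => hiddenState σ α (x i) k
  set G := fun i => Gvec σ α (x i) (y i) (k + 1)
  set w := fun i => deriv σ (mulVec' (α k) (h i) m) * G i m
  have hw : ∀ i, w i ^ 2 ≤ ‖G i‖ ^ 2 := fun i => by
    rw [← sq_abs, abs_mul]
    gcongr
    calc |deriv σ _| * |G i m| ≤ 1 * ‖G i‖ :=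
          mul_le_mul (hσ' _) (norm_le_pi_norm (G i) m) (abs_nonneg _) zero_le_one
      _ = ‖G i‖ := one_mul _
  have hL : (L : ℝ) * ((Real.sqrt L)⁻¹) ^ 2 = 1 := by
    have : (L : ℝ) ≠ 0 := by exact_mod_cast (Fin.pos k).ne'
    rw [inv_pow, Real.sq_sqrt (Nat.cast_nonneg L), mul_inv_cancel₀ this]
  have hentry : ∀ n, L * gradEntry σ x y α k m n ^ 2 ≤ (∑ i, h i n ^ 2 * ‖G i‖ ^ 2) / N :=
    fun n => calc
      L * gradEntry σ x y α k m n ^ 2 = ((∑ i, w i * h i n) / N) ^ 2 := by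
        have hsum : ∑ i, (Real.sqrt L)⁻¹ * deriv σ (mulVec' (α k) (h i) m) * h i n * G i m =
            (Real.sqrt L)⁻¹ * ∑ i, w i * h i n := by
          rw [mul_sum]
          exact sum_congr rfl fun i _ => by ring
        rw [gradEntry_eq hσ, hsum, mul_div_assoc, mul_pow, ← mul_assoc, hL, one_mul]
      _ ≤ (∑ i, (w i * h i n) ^ 2) / N := by
        simpa using sum_div_card_sq_le_sum_sq_div_card (s := univ) (f := fun i => w i * h i n)
      _ ≤ (∑ i, h i n ^ 2 * ‖G i‖ ^ 2) / N := by
        gcongr with i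
        rw [mul_pow, mul_comm]
        exact mul_le_mul_of_nonneg_left (hw i) (sq_nonneg _)
  calc L * ∑ n, gradEntry σ x y α k m n ^ 2
      ≤ ∑ n, (∑ i, h i n ^ 2 * ‖G i‖ ^ 2) / N := by
        rw [mul_sum]; exact sum_le_sum fun n _ => hentry n
    _ = (1 / N) * ∑ i, vnorm (h i) ^ 2 * ‖G i‖ ^ 2 := by
        simp only [vnorm_sq, sum_mul, ← sum_div]
        rw [sum_comm, one_div_mul_eq_div]

end ResNet

/-- The norm `‖·‖` on `Fin d → ℝ` is the sup norm `‖·‖_∞`. -/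
theorem statement9_general {d L N : ℕ}
    {σ : ℝ → ℝ} (hσ : ActAssump σ)
    (x y : Fin N → Fin d → ℝ) (α : Fin L → Fin d → Fin d → ℝ)
    (η : ℝ) (hη : 0 < η) (k : Fin L) (m : Fin d) :
    Real.sqrt ((1 / 2) * L * ∑ n, (α k m n - η * gradEntry σ x y α k m n) ^ 2)
      ≤ Real.sqrt ((1 / 2) * L * ∑ n, α k m n ^ 2)
        + (Real.sqrt 2)⁻¹ * η *
          Real.sqrt ((1 / N) * ∑ i,
            vnorm (hiddenState σ α (x i) (k : ℕ)) ^ 2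
              * ‖Gvec σ α (x i) (y i) ((k : ℕ) + 1)‖ ^ 2) := by
  have hσd : Differentiable ℝ σ := hσ.1.differentiable (by norm_num)
  have hgrad := mul_sum_sq_gradEntry_le hσd (fun z => (hσ.2.2 z).2.1) x y α k m
  set Sg := ∑ n, gradEntry σ x y α k m n ^ 2
  have hhalf : Real.sqrt ((1 / 2) * L) = (Real.sqrt 2)⁻¹ * Real.sqrt L := by
    rw [Real.sqrt_mul (by norm_num), one_div, Real.sqrt_inv]
  calc Real.sqrt ((1 / 2) * L * ∑ n, (α k m n - η * gradEntry σ x y α k m n) ^ 2)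
      = Real.sqrt ((1 / 2) * L) *
          Real.sqrt (∑ n, (α k m n - η * gradEntry σ x y α k m n) ^ 2) :=
        Real.sqrt_mul (by positivity) _
    _ ≤ Real.sqrt ((1 / 2) * L) * (Real.sqrt (∑ n, α k m n ^ 2) + η * Real.sqrt Sg) := by
        gcongr
        exact sqrt_sum_sq_sub_mul_le _ _ hη.le
    _ = Real.sqrt ((1 / 2) * L * ∑ n, α k m n ^ 2) + (Real.sqrt 2)⁻¹ * η * Real.sqrt (L * Sg) := by
        rw [Real.sqrt_mul (by positivity) (∑ n, α k m n ^ 2), Real.sqrt_mul (Nat.cast_nonneg L),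
          hhalf]
        ring
    _ ≤ _ := by gcongr

/-- **Evolution of the row norms under one gradient step (Lemma 3.3).**
Here `f_{k,m}(α) = (1/2) L ‖α_{k,m}‖₂²` and `α̃ = α − η ∇J(α)`; the norm
`‖·‖` on `Fin d → ℝ` is the sup norm `‖·‖_∞`. -/
theorem statement9 {d L N : ℕ} (hd : 1 ≤ d) (hL : 1 ≤ L) (hN : 1 ≤ N)
    {σ : ℝ → ℝ} (hσ : ActAssump σ)
    (x y : Fin N → Fin d → ℝ) (α : Fin L → Fin d → Fin d → ℝ)
    (η : ℝ) (hη : 0 < η) (k : Fin L) (m : Fin d) :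
    Real.sqrt ((1 / 2) * L * ∑ n, (α k m n - η * gradEntry σ x y α k m n) ^ 2)
      ≤ Real.sqrt ((1 / 2) * L * ∑ n, α k m n ^ 2)
        + (Real.sqrt 2)⁻¹ * η *
          Real.sqrt ((1 / N) * ∑ i,
            vnorm (hiddenState σ α (x i) (k : ℕ)) ^ 2
              * ‖Gvec σ α (x i) (y i) ((k : ℕ) + 1)‖ ^ 2) :=
  statement9_general hσ x y α η hη k m
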